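/- arXiv:1305.4302 — 9 statements merged into one kernel-verified Lean document; each statement's English description precedes it below -/
import Mathlib

section
/- Let I be a monomial ideal with an admissible order u_1,...,u_m and decomposition function 𝔤 (mapping each monomial v in I to u_j where j is minimal with v ∈ ⟨u_1,...,u_j⟩). If u ∈ G(I) and δ_1, δ_2 are sets of variables contained in 𝔮(u) with 𝔤(u·∏_{y∈δ_1} y) = 𝔤(u·∏_{y∈δ_2} y), then 𝔤(u·∏_{y∈δ_1} y) = 𝔤(u·∏_{y∈δ_1∪δ_2} y). -/
/-!
Monomials are exponent vectors, ordered pointwise, so divisibility is `≤` and the lcm is `⊔`.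
For `u_i ∣ v`, linear quotients say that some earlier generator divides `v` iff some
`x ∈ 𝔮(u_i)` divides `v / u_i`; hence `𝔤(v) = u_i` iff no variable of `𝔮(u_i)` divides
`v / u_i`. This condition is preserved by lcms, and
`u·∏_{δ₁ ∪ δ₂}` is the lcm of `u·∏_{δ₁}` and `u·∏_{δ₂}`.
-/

section DecompositionFunction

variable {n m : ℕ} {u : Fin m → Fin n → ℕ} {q : Fin m → Finset (Fin n)}
  {g : (Fin n → ℕ) → Fin m}

theorem exists_lt_le_iff_exists_mem_quotient
    (hq : ∀ j : Fin m, ∀ w : Fin n → ℕ,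
      ((∃ i, i < j ∧ u i ≤ w + u j) ↔ ∃ x ∈ q j, 1 ≤ w x))
    {i : Fin m} {v : Fin n → ℕ} (hv : u i ≤ v) :
    (∃ k, k < i ∧ u k ≤ v) ↔ ∃ x ∈ q i, u i x < v x := by
  have := hq i (v - u i)
  rw [tsub_add_cancel_of_le hv] at this
  refine this.trans (exists_congr fun x => and_congr_right fun _ => ?_)
  have := hv x
  simp only [Pi.sub_apply]
  omega

theorem decomposition_eq_iff_forall_lt_not_le
    (hg : ∀ v : Fin n → ℕ, (∃ i, u i ≤ v) → (u (g v) ≤ v ∧ ∀ i, u i ≤ v → g v ≤ i))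
    {i : Fin m} {v : Fin n → ℕ} (hv : u i ≤ v) :
    g v = i ↔ ∀ k, k < i → ¬ u k ≤ v := by
  obtain ⟨hdvd, hmin⟩ := hg v ⟨i, hv⟩
  constructor
  · rintro rfl k hk hkv
    exact (hmin k hkv).not_gt hk
  · exact fun h => le_antisymm (hmin i hv) (not_lt.1 fun hlt => h _ hlt hdvd)

theorem decomposition_eq_iff_forall_mem_quotient
    (hq : ∀ j : Fin m, ∀ w : Fin n → ℕ,
      ((∃ i, i < j ∧ u i ≤ w + u j) ↔ ∃ x ∈ q j, 1 ≤ w x))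
    (hg : ∀ v : Fin n → ℕ, (∃ i, u i ≤ v) → (u (g v) ≤ v ∧ ∀ i, u i ≤ v → g v ≤ i))
    {i : Fin m} {v : Fin n → ℕ} (hv : u i ≤ v) :
    g v = i ↔ ∀ x ∈ q i, v x ≤ u i x := by
  rw [decomposition_eq_iff_forall_lt_not_le hg hv]
  simpa using (exists_lt_le_iff_exists_mem_quotient hq hv).not

theorem decomposition_sup_of_eq
    (hq : ∀ j : Fin m, ∀ w : Fin n → ℕ,
      ((∃ i, i < j ∧ u i ≤ w + u j) ↔ ∃ x ∈ q j, 1 ≤ w x))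
    (hg : ∀ v : Fin n → ℕ, (∃ i, u i ≤ v) → (u (g v) ≤ v ∧ ∀ i, u i ≤ v → g v ≤ i))
    {v₁ v₂ : Fin n → ℕ} (hv₁ : ∃ i, u i ≤ v₁) (hv₂ : ∃ i, u i ≤ v₂) (heq : g v₁ = g v₂) :
    g (v₁ ⊔ v₂) = g v₁ := by
  have hdvd₁ : u (g v₁) ≤ v₁ := (hg v₁ hv₁).1
  have hdvd₂ : u (g v₁) ≤ v₂ := heq ▸ (hg v₂ hv₂).1
  have h₁ := (decomposition_eq_iff_forall_mem_quotient hq hg hdvd₁).1 rfl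
  have h₂ := (decomposition_eq_iff_forall_mem_quotient hq hg hdvd₂).1 heq.symm
  exact (decomposition_eq_iff_forall_mem_quotient hq hg (le_sup_of_le_left hdvd₁)).2
    fun x hx => sup_le (h₁ x hx) (h₂ x hx)

end DecompositionFunction

theorem decomposition_union_general (n m : ℕ) (u : Fin m → Fin n → ℕ)
    (q : Fin m → Finset (Fin n)) (g : (Fin n → ℕ) → Fin m)
    (hq : ∀ j : Fin m, ∀ w : Fin n → ℕ,
      ((∃ i, i < j ∧ ∀ t, u i t ≤ w t + u j t) ↔ ∃ x ∈ q j, 1 ≤ w x))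
    (hg : ∀ v : Fin n → ℕ, (∃ i, ∀ t, u i t ≤ v t) →
      ((∀ t, u (g v) t ≤ v t) ∧ ∀ i, (∀ t, u i t ≤ v t) → g v ≤ i))
    (j : Fin m) (δ₁ δ₂ : Finset (Fin n))
    (heq : g (fun t => u j t + if t ∈ δ₁ then 1 else 0)
         = g (fun t => u j t + if t ∈ δ₂ then 1 else 0)) :
    g (fun t => u j t + if t ∈ δ₁ then 1 else 0)
      = g (fun t => u j t + if t ∈ δ₁ ∪ δ₂ then 1 else 0) := by
  have hlcm : (fun t => u j t + if t ∈ δ₁ ∪ δ₂ then 1 else 0)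
      = (fun t => u j t + if t ∈ δ₁ then 1 else 0) ⊔
        (fun t => u j t + if t ∈ δ₂ then 1 else 0) := by
    funext t
    by_cases h₁ : t ∈ δ₁ <;> by_cases h₂ : t ∈ δ₂ <;> simp [h₁, h₂]
  have hdvd (δ : Finset (Fin n)) : ∃ i, u i ≤ fun t => u j t + if t ∈ δ then 1 else 0 :=
    ⟨j, fun _ => Nat.le_add_right _ _⟩
  rw [hlcm, decomposition_sup_of_eq hq hg (hdvd δ₁) (hdvd δ₂) heq]

/-- Monomials are exponent vectors `Fin n → ℕ`.  `u` lists the minimal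
generators in an admissible order with quotient variable sets `q` and
decomposition function `g` (returning the index of the earliest generator
dividing the given monomial), assumed regular.  If `𝔤(δ₁;u_j) = 𝔤(δ₂;u_j)`
for `δ₁, δ₂ ⊆ 𝔮(u_j)`, then `𝔤(δ₁;u_j) = 𝔤(δ₁ ∪ δ₂;u_j)`. -/
theorem decomposition_union (n m : ℕ) (u : Fin m → Fin n → ℕ)
    (q : Fin m → Finset (Fin n)) (g : (Fin n → ℕ) → Fin m)
    (hq : ∀ j : Fin m, ∀ w : Fin n → ℕ,
      ((∃ i, i < j ∧ ∀ t, u i t ≤ w t + u j t) ↔ ∃ x ∈ q j, 1 ≤ w x))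
    (hg : ∀ v : Fin n → ℕ, (∃ i, ∀ t, u i t ≤ v t) →
      ((∀ t, u (g v) t ≤ v t) ∧ ∀ i, (∀ t, u i t ≤ v t) → g v ≤ i))
    (hreg : ∀ j : Fin m, ∀ y ∈ q j,
      q (g (fun t => u j t + if t = y then 1 else 0)) ⊆ q j)
    (j : Fin m) (δ₁ δ₂ : Finset (Fin n)) (h1 : δ₁ ⊆ q j) (h2 : δ₂ ⊆ q j)
    (heq : g (fun t => u j t + if t ∈ δ₁ then 1 else 0)
         = g (fun t => u j t + if t ∈ δ₂ then 1 else 0)) :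
    g (fun t => u j t + if t ∈ δ₁ then 1 else 0)
      = g (fun t => u j t + if t ∈ δ₁ ∪ δ₂ then 1 else 0) :=
  decomposition_union_general n m u q g hq hg j δ₁ δ₂ heq
end

section
/- Let I be a monomial ideal with a regular linear quotient, u ∈ G(I), and for σ ⊆ 𝔮(u) define c(σ) to be the largest subset τ of 𝔮(u) with 𝔤(σ; u) = 𝔤(τ; u). Then c is a closure operator on 𝔮(u): σ ⊆ c(σ); σ ⊆ τ implies c(σ) ⊆ c(τ); and c(c(σ)) = c(σ). -/
section HTAux

variable {n m : ℕ} {u : Fin m → Fin n → ℕ} {q : Fin m → Finset (Fin n)}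
  {g : (Fin n → ℕ) → Fin m}

/-- On coordinates of `q (g w)`, the vector `w` agrees with `u (g w)`. -/
private lemma HT_supp
    (hq : ∀ j : Fin m, ∀ w : Fin n → ℕ,
      ((∃ i, i < j ∧ ∀ t, u i t ≤ w t + u j t) ↔ ∃ x ∈ q j, 1 ≤ w x))
    (hg : ∀ v : Fin n → ℕ, (∃ i, ∀ t, u i t ≤ v t) →
      ((∀ t, u (g v) t ≤ v t) ∧ ∀ i, (∀ t, u i t ≤ v t) → g v ≤ i))
    (w : Fin n → ℕ) (hw : ∃ i, ∀ t, u i t ≤ w t) :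
    (∀ t, u (g w) t ≤ w t) ∧ ∀ x ∈ q (g w), w x = u (g w) x := by
  obtain ⟨h1, h2⟩ := hg w hw
  refine ⟨h1, fun x hx => ?_⟩
  by_contra hne
  have hlt : u (g w) x < w x := lt_of_le_of_ne (h1 x) fun h => hne h.symm
  obtain ⟨i, hij, hi⟩ := (hq (g w) (fun t => w t - u (g w) t)).mpr ⟨x, hx, by omega⟩
  have hle : g w ≤ i := h2 i fun t => by
    have h3 := hi t; have h4 := h1 t
    omega
  exact absurd hle (not_le.mpr hij)

private lemma HT_step
    (hq : ∀ j : Fin m, ∀ w : Fin n → ℕ,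
      ((∃ i, i < j ∧ ∀ t, u i t ≤ w t + u j t) ↔ ∃ x ∈ q j, 1 ≤ w x))
    (hg : ∀ v : Fin n → ℕ, (∃ i, ∀ t, u i t ≤ v t) →
      ((∀ t, u (g v) t ≤ v t) ∧ ∀ i, (∀ t, u i t ≤ v t) → g v ≤ i))
    (hreg : ∀ j : Fin m, ∀ y ∈ q j,
      q (g (fun t => u j t + if t = y then 1 else 0)) ⊆ q j)
    (j : Fin m) (σ : Finset (Fin n)) (w : Fin n) :
    q (g (fun t => u j t + if t ∈ insert w σ then 1 else 0)) ⊆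
      q (g (fun t => u j t + if t ∈ σ then 1 else 0)) := by
  by_cases hwσ : w ∈ σ
  · rw [Finset.insert_eq_self.mpr hwσ]
  set a : Fin n → ℕ := fun t => u j t + if t ∈ σ then 1 else 0 with ha
  set a' : Fin n → ℕ := fun t => u j t + if t ∈ insert w σ then 1 else 0 with ha'
  -- atom-level facts
  have hins : ∀ t, t ≠ w → a' t = a t := by
    intro t ht
    simp only [ha, ha']
    simp [Finset.mem_insert, ht]
  have hinsw : a' w = a w + 1 := by
    simp only [ha, ha']
    simp [hwσ]
  have haw : a w = u j w := by simp only [ha]; simp [hwσ]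
  have hexa : ∃ i, ∀ t, u i t ≤ a t := ⟨j, fun t => Nat.le_add_right _ _⟩
  have hexa' : ∃ i, ∀ t, u i t ≤ a' t := ⟨j, fun t => Nat.le_add_right _ _⟩
  obtain ⟨hla, hsa⟩ := HT_supp hq hg a hexa
  obtain ⟨hla', hsa'⟩ := HT_supp hq hg a' hexa'
  have hmina' := (hg a' hexa').2
  set l' := g a with hl'
  set l := g a' with hl
  have haa' : ∀ t, a t ≤ a' t := by
    intro t
    rcases eq_or_ne t w with rfl | ht
    · omega
    · rw [hins t ht]
  by_cases hwq : w ∈ q l'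
  · -- case w ∈ q(g a): use regularity
    set b : Fin n → ℕ := fun t => u l' t + if t = w then 1 else 0 with hb
    have hexb : ∃ i, ∀ t, u i t ≤ b t := ⟨l', fun t => Nat.le_add_right _ _⟩
    obtain ⟨hlb, hsb⟩ := HT_supp hq hg b hexb
    set r := g b with hr
    have hqr : q r ⊆ q l' := hreg l' w hwq
    have hbne : ∀ t, t ≠ w → b t = u l' t := by
      intro t ht; simp only [hb]; simp [ht]
    have hbw : b w = u l' w + 1 := by simp only [hb]; simp
    have hra' : ∀ t, u r t ≤ a' t := by
      intro t
      have h1 := hlb t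
      have h2 := hla t
      rcases eq_or_ne t w with rfl | ht
      · omega
      · rw [hbne t ht] at h1; rw [hins t ht]; omega
    have hlr : l ≤ r := hmina' r hra'
    have hnlt : ¬ l < r := by
      intro hlt
      obtain ⟨x, hxr, h1x⟩ := (hq r (fun t => a' t - u r t)).mp
        ⟨l, hlt, fun t => by
          have h1 := hla' t; have h2 := hra' t
          omega⟩
      have hxl' : x ∈ q l' := hqr hxr
      have hsbx := hsb x hxr
      have hsax := hsa x hxl'
      rcases eq_or_ne x w with rfl | hx
      · have := hra' x
        omega
      · rw [hbne x hx] at hsbx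
        rw [hins x hx] at h1x
        have := hla x
        omega
    have hlr' : l = r := le_antisymm hlr (not_lt.mp hnlt)
    rw [hlr']
    exact hqr
  · -- case w ∉ q(g a): the generator does not change
    have hglea : l ≤ l' := hmina' l' fun t => le_trans (hla t) (haa' t)
    have hnlt : ¬ l < l' := by
      intro hlt
      obtain ⟨x, hx, h1x⟩ := (hq l' (fun t => a' t - u l' t)).mp
        ⟨l, hlt, fun t => by
          have h1 := hla' t
          have h2 := le_trans (hla t) (haa' t)
          omega⟩
      have hsax := hsa x hx
      rcases eq_or_ne x w with rfl | hxw
      · exact hwq hx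
      · rw [hins x hxw] at h1x
        omega
    have : l = l' := le_antisymm hglea (not_lt.mp hnlt)
    rw [this]

private lemma HT_chain
    (hq : ∀ j : Fin m, ∀ w : Fin n → ℕ,
      ((∃ i, i < j ∧ ∀ t, u i t ≤ w t + u j t) ↔ ∃ x ∈ q j, 1 ≤ w x))
    (hg : ∀ v : Fin n → ℕ, (∃ i, ∀ t, u i t ≤ v t) →
      ((∀ t, u (g v) t ≤ v t) ∧ ∀ i, (∀ t, u i t ≤ v t) → g v ≤ i))
    (hreg : ∀ j : Fin m, ∀ y ∈ q j,
      q (g (fun t => u j t + if t = y then 1 else 0)) ⊆ q j)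
    (j : Fin m) {δ τ : Finset (Fin n)} (h : δ ⊆ τ) :
    q (g (fun t => u j t + if t ∈ τ then 1 else 0)) ⊆
      q (g (fun t => u j t + if t ∈ δ then 1 else 0)) := by
  have main : ∀ s δ' : Finset (Fin n),
      q (g (fun t => u j t + if t ∈ δ' ∪ s then 1 else 0)) ⊆
        q (g (fun t => u j t + if t ∈ δ' then 1 else 0)) := by
    intro s
    induction s using Finset.induction_on with
    | empty => intro δ'; rw [Finset.union_empty]
    | @insert a s ha ih =>
        intro δ'
        rw [Finset.union_insert]
        exact (HT_step hq hg hreg j (δ' ∪ s) a).trans (ih δ')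
  have hres := main (τ \ δ) δ
  rwa [Finset.union_sdiff_of_subset h] at hres

private lemma HT_key
    (hq : ∀ j : Fin m, ∀ w : Fin n → ℕ,
      ((∃ i, i < j ∧ ∀ t, u i t ≤ w t + u j t) ↔ ∃ x ∈ q j, 1 ≤ w x))
    (hg : ∀ v : Fin n → ℕ, (∃ i, ∀ t, u i t ≤ v t) →
      ((∀ t, u (g v) t ≤ v t) ∧ ∀ i, (∀ t, u i t ≤ v t) → g v ≤ i))
    (hreg : ∀ j : Fin m, ∀ y ∈ q j,
      q (g (fun t => u j t + if t = y then 1 else 0)) ⊆ q j)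
    (j : Fin m) (δ δ' τ : Finset (Fin n)) (hδτ : δ ⊆ τ)
    (heq : g (fun t => u j t + if t ∈ δ then 1 else 0)
      = g (fun t => u j t + if t ∈ δ' then 1 else 0)) :
    g (fun t => u j t + if t ∈ τ ∪ δ' then 1 else 0)
      = g (fun t => u j t + if t ∈ τ then 1 else 0) := by
  set A : Fin n → ℕ := fun t => u j t + if t ∈ τ ∪ δ' then 1 else 0 with hA
  set B : Fin n → ℕ := fun t => u j t + if t ∈ τ then 1 else 0 with hB
  set C : Fin n → ℕ := fun t => u j t + if t ∈ δ then 1 else 0 with hC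
  set D : Fin n → ℕ := fun t => u j t + if t ∈ δ' then 1 else 0 with hD
  have hexA : ∃ i, ∀ t, u i t ≤ A t := ⟨j, fun t => Nat.le_add_right _ _⟩
  have hexB : ∃ i, ∀ t, u i t ≤ B t := ⟨j, fun t => Nat.le_add_right _ _⟩
  have hexC : ∃ i, ∀ t, u i t ≤ C t := ⟨j, fun t => Nat.le_add_right _ _⟩
  have hexD : ∃ i, ∀ t, u i t ≤ D t := ⟨j, fun t => Nat.le_add_right _ _⟩
  obtain ⟨hlA, hsA⟩ := HT_supp hq hg A hexA
  obtain ⟨hlB, hsB⟩ := HT_supp hq hg B hexB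
  obtain ⟨hlC, hsC⟩ := HT_supp hq hg C hexC
  obtain ⟨hlD, hsD⟩ := HT_supp hq hg D hexD
  have hminA := (hg A hexA).2
  have hBA : ∀ t, B t ≤ A t := by
    intro t
    simp only [hA, hB]
    by_cases ht : t ∈ τ
    · simp [ht, Finset.mem_union_left δ' ht]
    · simp [ht]
  have hle : g A ≤ g B := hminA (g B) fun t => le_trans (hlB t) (hBA t)
  have hnlt : ¬ g A < g B := by
    intro hlt
    obtain ⟨x, hx, h1x⟩ := (hq (g B) (fun t => A t - u (g B) t)).mp
      ⟨g A, hlt, fun t => by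
        have h1 := hlA t
        have h2 := le_trans (hlB t) (hBA t)
        omega⟩
    have hsBx := hsB x hx
    -- x must lie in δ' \ τ
    have hxτ : x ∉ τ := by
      intro hxτ
      have hABx : A x = B x := by
        simp only [hA, hB]
        simp [hxτ, Finset.mem_union_left δ' hxτ]
      omega
    have hxδ' : x ∈ δ' := by
      by_contra hxδ'
      have hABx : A x = B x := by
        simp only [hA, hB]
        simp [hxτ, hxδ', Finset.mem_union]
      omega
    have hxδ : x ∉ δ := fun hxδ => hxτ (hδτ hxδ)
    have hxC : x ∈ q (g C) := HT_chain hq hg hreg j hδτ hx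
    have hxD : x ∈ q (g D) := heq ▸ hxC
    have hsCx := hsC x hxC
    have hsDx := hsD x hxD
    have hCx : C x = u j x := by simp only [hC]; simp [hxδ]
    have hDx : D x = u j x + 1 := by simp only [hD]; simp [hxδ']
    rw [heq] at hsCx
    omega
  exact le_antisymm hle (not_lt.mp hnlt)

end HTAux

/-- Setup as in the Herzog–Takayama paper: monomials are exponent vectors,
`u` is an admissible order with quotient sets `q`, decomposition function `g`
(index valued), assumed regular.  For `σ ⊆ 𝔮(u_j)`, `c σ` is the largest
`τ ⊆ 𝔮(u_j)` with `𝔤(σ;u_j) = 𝔤(τ;u_j)`.  Then `c` is a closure operator. -/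
theorem closure_operator (n m : ℕ) (u : Fin m → Fin n → ℕ)
    (q : Fin m → Finset (Fin n)) (g : (Fin n → ℕ) → Fin m)
    (hq : ∀ j : Fin m, ∀ w : Fin n → ℕ,
      ((∃ i, i < j ∧ ∀ t, u i t ≤ w t + u j t) ↔ ∃ x ∈ q j, 1 ≤ w x))
    (hg : ∀ v : Fin n → ℕ, (∃ i, ∀ t, u i t ≤ v t) →
      ((∀ t, u (g v) t ≤ v t) ∧ ∀ i, (∀ t, u i t ≤ v t) → g v ≤ i))
    (hreg : ∀ j : Fin m, ∀ y ∈ q j,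
      q (g (fun t => u j t + if t = y then 1 else 0)) ⊆ q j)
    (j : Fin m) (c : Finset (Fin n) → Finset (Fin n))
    (hc : ∀ σ, σ ⊆ q j → (c σ ⊆ q j ∧
      g (fun t => u j t + if t ∈ c σ then 1 else 0)
        = g (fun t => u j t + if t ∈ σ then 1 else 0) ∧
      ∀ τ, τ ⊆ q j →
        g (fun t => u j t + if t ∈ τ then 1 else 0)
          = g (fun t => u j t + if t ∈ σ then 1 else 0) → τ ⊆ c σ)) :
    (∀ σ, σ ⊆ q j → σ ⊆ c σ) ∧
    (∀ σ τ, σ ⊆ τ → τ ⊆ q j → c σ ⊆ c τ) ∧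
    (∀ σ, σ ⊆ q j → c (c σ) = c σ) := by
  refine ⟨?_, ?_, ?_⟩
  · intro σ hσ
    exact (hc σ hσ).2.2 σ hσ rfl
  · intro σ τ hστ hτ
    have hσ : σ ⊆ q j := hστ.trans hτ
    obtain ⟨hc1, hc2, hc3⟩ := hc σ hσ
    obtain ⟨hd1, hd2, hd3⟩ := hc τ hτ
    have hkey := HT_key hq hg hreg j σ (c σ) τ hστ hc2.symm
    have hsub : τ ∪ c σ ⊆ c τ := hd3 (τ ∪ c σ) (Finset.union_subset hτ hc1) hkey
    exact fun x hx => hsub (Finset.mem_union_right _ hx)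
  · intro σ hσ
    obtain ⟨hc1, hc2, hc3⟩ := hc σ hσ
    obtain ⟨he1, he2, he3⟩ := hc (c σ) hc1
    exact Finset.Subset.antisymm (hc3 (c (c σ)) he1 (he2.trans hc2)) (he3 (c σ) hc1 rfl)
end

section
/- Let I be a monomial ideal with a regular linear quotient and u ∈ G(I). The closure operator c on 𝔮(u), where c(σ) is the largest τ ⊆ 𝔮(u) with 𝔤(σ;u) = 𝔤(τ;u), satisfies the anti-exchange axiom: if a ≠ b, a, b ∉ c(σ), and a ∈ c(σ ∪ {b}), then b ∉ c(σ ∪ {a}). Hence (𝔮(u), c) is a convex geometry. -/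
/-!
Write `G σ` for the index of `𝔤(σ;u)`. Adding a variable `y ∉ σ` lowers `G` exactly when
`y ∈ 𝔮(G σ)`, so `c σ = σ ∪ (𝔮(u) \ 𝔮(G σ))`. Regularity makes `σ ↦ 𝔮(G σ)` antitone, which gives
monotonicity of `c`. For anti-exchange, if `a ∈ c(σ ∪ {b})` and `b ∈ c(σ ∪ {a})`, then
`G(σ ∪ {a}) = G(σ ∪ {a, b}) = G(σ ∪ {b})`; the generator with this index divides both `u x_σ x_a`
and `u x_σ x_b`, hence their gcd `u x_σ`, so `G(σ ∪ {a}) = G σ`, i.e. `a ∈ c σ`.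
-/

variable {α ι : Type*} [LinearOrder ι]

def IsDecompositionFunction (u : ι → α → ℕ) (g : (α → ℕ) → ι) : Prop :=
  ∀ v, (∃ i, u i ≤ v) → IsLeast {i | u i ≤ v} (g v)

namespace IsDecompositionFunction

variable {u : ι → α → ℕ} {g : (α → ℕ) → ι} {v w : α → ℕ} {i : ι}

lemma u_le (hg : IsDecompositionFunction u g) (hv : u i ≤ v) : u (g v) ≤ v :=
  (hg v ⟨i, hv⟩).1

lemma le_of_u_le (hg : IsDecompositionFunction u g) (hv : u i ≤ v) : g v ≤ i :=
  (hg v ⟨i, hv⟩).2 hv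

lemma antitone (hg : IsDecompositionFunction u g) (hv : u i ≤ v) (hvw : v ≤ w) : g w ≤ g v :=
  hg.le_of_u_le ((hg.u_le hv).trans hvw)

end IsDecompositionFunction

variable [DecidableEq α]

/-- The exponent vector of `x^v · ∏_{y ∈ σ} y`. -/
def mulVars (v : α → ℕ) (σ : Finset α) : α → ℕ := fun t => v t + if t ∈ σ then 1 else 0

section mulVars

variable {v w : α → ℕ} {σ τ : Finset α} {a : α}

lemma mulVars_apply (v : α → ℕ) (σ : Finset α) (t : α) :
    mulVars v σ t = v t + if t ∈ σ then 1 else 0 := rfl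

lemma le_mulVars (v : α → ℕ) (σ : Finset α) : v ≤ mulVars v σ := fun _ => Nat.le_add_right _ _

lemma mulVars_le_mulVars (h : v ≤ w) (σ : Finset α) : mulVars v σ ≤ mulVars w σ :=
  fun t => Nat.add_le_add_right (h t) _

lemma mulVars_subset_le (h : σ ⊆ τ) : mulVars v σ ≤ mulVars v τ := fun t => by
  by_cases ht : t ∈ σ
  · simp [mulVars_apply, ht, h ht]
  · simp only [mulVars_apply, ht, if_false]
    omega

@[simp] lemma mulVars_empty (v : α → ℕ) : mulVars v ∅ = v := by
  funext t
  simp [mulVars_apply]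

lemma mulVars_singleton_apply_of_ne {t : α} (h : t ≠ a) : mulVars v {a} t = v t := by
  simp [mulVars_apply, h]

lemma mulVars_comm (v : α → ℕ) (σ τ : Finset α) :
    mulVars (mulVars v σ) τ = mulVars (mulVars v τ) σ := by
  funext t
  simp only [mulVars_apply]
  omega

lemma mulVars_insert (h : a ∉ σ) : mulVars v (insert a σ) = mulVars (mulVars v σ) {a} := by
  funext t
  by_cases ht : t = a
  · subst ht
    simp [mulVars_apply, h]
  · simp [mulVars_apply, ht]

lemma mulVars_sdiff (h : σ ⊆ τ) : mulVars (mulVars v σ) (τ \ σ) = mulVars v τ := by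
  funext t
  by_cases ht : t ∈ σ
  · simp [mulVars_apply, ht, h ht]
  · simp [mulVars_apply, ht]

end mulVars

namespace IsDecompositionFunction

variable {u : ι → α → ℕ} {g : (α → ℕ) → ι} {v : α → ℕ} {i : ι}

/-- The generator with index `g(v x_a) = g(v x_b)` divides `gcd(v x_a, v x_b) = v`. -/
lemma eq_of_mulVars_singleton_eq (hg : IsDecompositionFunction u g) (hv : u i ≤ v) {a b : α}
    (hab : a ≠ b) (h : g (mulVars v {a}) = g (mulVars v {b})) : g (mulVars v {a}) = g v := by
  have ha := hg.u_le ((hv.trans (le_mulVars v {a})))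
  have hb := hg.u_le ((hv.trans (le_mulVars v {b})))
  rw [← h] at hb
  refine le_antisymm (hg.antitone hv (le_mulVars v _)) (hg.le_of_u_le fun t => ?_)
  by_cases hta : t = a
  · subst hta
    simpa [mulVars_singleton_apply_of_ne hab] using hb t
  · simpa [mulVars_singleton_apply_of_ne hta] using ha t

end IsDecompositionFunction

/-- Monomials are exponent vectors, so divisibility is the pointwise order; `u` lists the minimal
generators in the admissible order, `q j` is `𝔮(u_j)` and `g` is the decomposition function `𝔤`. -/
structure RegularLinearQuotient (u : ι → α → ℕ) (q : ι → Finset α) (g : (α → ℕ) → ι) : Prop where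
  exists_lt_iff : ∀ j (w : α → ℕ), (∃ i < j, u i ≤ w + u j) ↔ ∃ x ∈ q j, 1 ≤ w x
  isDecompositionFunction : IsDecompositionFunction u g
  regular : ∀ j, ∀ y ∈ q j, q (g (mulVars (u j) {y})) ⊆ q j

namespace RegularLinearQuotient

variable {u : ι → α → ℕ} {q : ι → Finset α} {g : (α → ℕ) → ι} (hI : RegularLinearQuotient u q g)
  {v w : α → ℕ} {i k : ι} {x y : α}

include hI

lemma exists_lt_le_mulVars_of_mem (hx : x ∈ q k) : ∃ i < k, u i ≤ mulVars (u k) {x} := by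
  obtain ⟨i, hik, hi⟩ := (hI.exists_lt_iff k (mulVars 0 {x})).2 ⟨x, hx, by simp [mulVars_apply]⟩
  refine ⟨i, hik, hi.trans_eq ?_⟩
  funext t
  simp only [Pi.add_apply, mulVars_apply, Pi.zero_apply]
  omega

lemma exists_mem_lt_of_g_lt (hkw : u k ≤ w) (hlt : g w < k) : ∃ x ∈ q k, u k x < w x := by
  have hg := hI.isDecompositionFunction
  obtain ⟨x, hx, hx1⟩ := (hI.exists_lt_iff k (w - u k)).1
    ⟨g w, hlt, (hg.u_le hkw).trans_eq (tsub_add_cancel_of_le hkw).symm⟩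
  exact ⟨x, hx, by simp only [Pi.sub_apply] at hx1; omega⟩

lemma apply_le_of_mem_q_g (hv : u i ≤ v) (hx : x ∈ q (g v)) : v x ≤ u (g v) x := by
  have hg := hI.isDecompositionFunction
  by_contra! hlt
  obtain ⟨i', hi', hi'v⟩ := hI.exists_lt_le_mulVars_of_mem hx
  refine (hg.le_of_u_le (v := v) fun t => ?_).not_gt hi'
  by_cases ht : t = x
  · subst ht
    calc u i' t ≤ u (g v) t + 1 := by simpa [mulVars_apply] using hi'v t
      _ ≤ v t := hlt
  · exact (hi'v t).trans ((mulVars_singleton_apply_of_ne ht).trans_le (hg.u_le hv t))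

lemma g_mulVars_singleton_lt (hv : u i ≤ v) (hy : y ∈ q (g v)) : g (mulVars v {y}) < g v := by
  have hg := hI.isDecompositionFunction
  obtain ⟨i', hi', hi'v⟩ := hI.exists_lt_le_mulVars_of_mem hy
  exact (hg.le_of_u_le (hi'v.trans (mulVars_le_mulVars (hg.u_le hv) _))).trans_lt hi'

lemma g_mulVars_singleton_eq (hv : u i ≤ v) (hy : y ∉ q (g v)) : g (mulVars v {y}) = g v := by
  have hg := hI.isDecompositionFunction
  refine (hg.antitone hv (le_mulVars v _)).eq_of_not_lt fun hlt => ?_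
  obtain ⟨x, hx, hxlt⟩ :=
    hI.exists_mem_lt_of_g_lt ((hg.u_le hv).trans (le_mulVars v {y})) hlt
  have hxy : x ≠ y := by rintro rfl; exact hy hx
  rw [mulVars_singleton_apply_of_ne hxy] at hxlt
  exact (hI.apply_le_of_mem_q_g hv hx).not_gt hxlt

lemma g_mulVars_singleton_eq_iff (hv : u i ≤ v) : g (mulVars v {y}) = g v ↔ y ∉ q (g v) :=
  ⟨fun h hy => (hI.g_mulVars_singleton_lt hv hy).ne h, hI.g_mulVars_singleton_eq hv⟩

lemma g_mulVars_singleton_eq_g_u_mulVars (hv : u i ≤ v) (hz : y ∈ q (g v)) :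
    g (mulVars v {y}) = g (mulVars (u (g v)) {y}) := by
  have hg := hI.isDecompositionFunction
  have hkv := hg.u_le hv
  have hk' := hg.u_le (le_mulVars (u (g v)) {y})
  refine le_antisymm (hg.antitone (le_mulVars _ _) (mulVars_le_mulVars hkv _)) ?_
  by_contra! hlt
  obtain ⟨x, hx, hxlt⟩ := hI.exists_mem_lt_of_g_lt (hk'.trans (mulVars_le_mulVars hkv _)) hlt
  have hxk' := hI.apply_le_of_mem_q_g (le_mulVars _ _) hx
  have hxk := hI.apply_le_of_mem_q_g hv (hI.regular _ y hz hx)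
  simp only [mulVars_apply] at hxk' hxlt
  omega

lemma q_g_mulVars_singleton_subset (hv : u i ≤ v) : q (g (mulVars v {y})) ⊆ q (g v) := by
  by_cases hy : y ∈ q (g v)
  · rw [hI.g_mulVars_singleton_eq_g_u_mulVars hv hy]
    exact hI.regular _ y hy
  · rw [hI.g_mulVars_singleton_eq hv hy]

lemma q_g_mulVars_subset (hv : u i ≤ v) (σ : Finset α) : q (g (mulVars v σ)) ⊆ q (g v) := by
  induction σ using Finset.induction_on with
  | empty => simp
  | insert a σ ha ih =>
    rw [mulVars_insert ha]
    exact (hI.q_g_mulVars_singleton_subset (hv.trans (le_mulVars v σ))).trans ih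

lemma q_g_mulVars_antitone (hv : u i ≤ v) {σ τ : Finset α} (h : σ ⊆ τ) :
    q (g (mulVars v τ)) ⊆ q (g (mulVars v σ)) := by
  rw [← mulVars_sdiff h]
  exact hI.q_g_mulVars_subset (hv.trans (le_mulVars v σ)) _

lemma notMem_q_g_of_notMem_q_g_mulVars (hv : u i ≤ v) {a b : α} (hab : a ≠ b)
    (ha : a ∉ q (g (mulVars v {b}))) (hb : b ∉ q (g (mulVars v {a}))) : a ∉ q (g v) := by
  have hg := hI.isDecompositionFunction
  have hva := hv.trans (le_mulVars v {a})
  have hvb := hv.trans (le_mulVars v {b})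
  have hab' : g (mulVars v {a}) = g (mulVars v {b}) := by
    rw [← hI.g_mulVars_singleton_eq hva hb, ← hI.g_mulVars_singleton_eq hvb ha, mulVars_comm]
  rw [← hI.g_mulVars_singleton_eq_iff hv]
  exact hg.eq_of_mulVars_singleton_eq hv hab hab'

section closure

variable {j : ι} {c : Finset α → Finset α}
  (hc : ∀ σ ⊆ q j, IsGreatest {τ | τ ⊆ q j ∧ g (mulVars (u j) τ) = g (mulVars (u j) σ)} (c σ))
include hc

lemma mem_closure_iff {σ : Finset α} (hσ : σ ⊆ q j) :
    y ∈ c σ ↔ y ∈ σ ∨ y ∈ q j ∧ y ∉ q (g (mulVars (u j) σ)) := by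
  have hg := hI.isDecompositionFunction
  obtain ⟨⟨hcq, hcg⟩, hcmax⟩ := hc σ hσ
  have hσc : σ ⊆ c σ := hcmax ⟨hσ, rfl⟩
  by_cases hyσ : y ∈ σ
  · simp [hyσ, hσc hyσ]
  simp only [hyσ, false_or]
  have hju := le_mulVars (u j) σ
  rw [← hI.g_mulVars_singleton_eq_iff hju, ← mulVars_insert hyσ]
  constructor
  · intro hy
    refine ⟨hcq hy, le_antisymm (hg.antitone hju (mulVars_subset_le (Finset.subset_insert y σ))) ?_⟩
    calc g (mulVars (u j) σ) = g (mulVars (u j) (c σ)) := hcg.symm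
      _ ≤ g (mulVars (u j) (insert y σ)) :=
        hg.antitone (le_mulVars _ _) (mulVars_subset_le (Finset.insert_subset hy hσc))
  · rintro ⟨hyq, hyg⟩
    exact hcmax ⟨Finset.insert_subset hyq hσ, hyg⟩ (Finset.mem_insert_self y σ)

lemma closure_mono {σ τ : Finset α} (hστ : σ ⊆ τ) (hτ : τ ⊆ q j) : c σ ⊆ c τ := by
  intro y hy
  rw [hI.mem_closure_iff hc (hστ.trans hτ)] at hy
  rw [hI.mem_closure_iff hc hτ]
  rcases hy with hyσ | ⟨hyq, hyg⟩
  · exact Or.inl (hστ hyσ)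
  · exact Or.inr ⟨hyq, fun hy => hyg (hI.q_g_mulVars_antitone (le_refl (u j)) hστ hy)⟩

lemma notMem_q_g_of_mem_closure_insert {σ : Finset α} (hσ : σ ⊆ q j) {a b : α} (hbq : b ∈ q j)
    (hab : a ≠ b) (haσ : a ∉ σ) (hbσ : b ∉ σ) (h : a ∈ c (insert b σ)) :
    a ∉ q (g (mulVars (mulVars (u j) σ) {b})) := by
  rw [hI.mem_closure_iff hc (Finset.insert_subset hbq hσ), mulVars_insert hbσ] at h
  obtain ⟨-, h⟩ : a ∈ q j ∧ _ := by simpa [hab, haσ] using h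
  exact h

lemma notMem_and_mem_q_g_of_notMem_closure {σ : Finset α} (hσ : σ ⊆ q j) (hyq : y ∈ q j)
    (hy : y ∉ c σ) : y ∉ σ ∧ y ∈ q (g (mulVars (u j) σ)) := by
  simpa [hI.mem_closure_iff hc hσ, hyq] using hy

lemma closure_anti_exchange {σ : Finset α} (hσ : σ ⊆ q j) {a b : α} (haq : a ∈ q j)
    (hbq : b ∈ q j) (hab : a ≠ b) (ha : a ∉ c σ) (hb : b ∉ c σ) (hab_mem : a ∈ c (insert b σ)) :
    b ∉ c (insert a σ) := fun hba_mem => by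
  obtain ⟨haσ, haG⟩ := hI.notMem_and_mem_q_g_of_notMem_closure hc hσ haq ha
  obtain ⟨hbσ, -⟩ := hI.notMem_and_mem_q_g_of_notMem_closure hc hσ hbq hb
  exact hI.notMem_q_g_of_notMem_q_g_mulVars (le_mulVars (u j) σ) hab
    (hI.notMem_q_g_of_mem_closure_insert hc hσ hbq hab haσ hbσ hab_mem)
    (hI.notMem_q_g_of_mem_closure_insert hc hσ haq hab.symm hbσ haσ hba_mem) haG

end closure

end RegularLinearQuotient

/-- Setup as in stmt 2.  The closure operator `c` on `𝔮(u_j)` satisfies the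
anti-exchange axiom, hence `(𝔮(u_j), c)` is a convex geometry. -/
theorem convex_geometry (n m : ℕ) (u : Fin m → Fin n → ℕ)
    (q : Fin m → Finset (Fin n)) (g : (Fin n → ℕ) → Fin m)
    (hq : ∀ j : Fin m, ∀ w : Fin n → ℕ,
      ((∃ i, i < j ∧ ∀ t, u i t ≤ w t + u j t) ↔ ∃ x ∈ q j, 1 ≤ w x))
    (hg : ∀ v : Fin n → ℕ, (∃ i, ∀ t, u i t ≤ v t) →
      ((∀ t, u (g v) t ≤ v t) ∧ ∀ i, (∀ t, u i t ≤ v t) → g v ≤ i))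
    (hreg : ∀ j : Fin m, ∀ y ∈ q j,
      q (g (fun t => u j t + if t = y then 1 else 0)) ⊆ q j)
    (j : Fin m) (c : Finset (Fin n) → Finset (Fin n))
    (hc : ∀ σ, σ ⊆ q j → (c σ ⊆ q j ∧
      g (fun t => u j t + if t ∈ c σ then 1 else 0)
        = g (fun t => u j t + if t ∈ σ then 1 else 0) ∧
      ∀ τ, τ ⊆ q j →
        g (fun t => u j t + if t ∈ τ then 1 else 0)
          = g (fun t => u j t + if t ∈ σ then 1 else 0) → τ ⊆ c σ)) :
    (∀ σ, σ ⊆ q j → σ ⊆ c σ) ∧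
    (∀ σ τ, σ ⊆ τ → τ ⊆ q j → c σ ⊆ c τ) ∧
    (∀ σ, σ ⊆ q j → c (c σ) = c σ) ∧
    (∀ σ, σ ⊆ q j → ∀ a ∈ q j, ∀ b ∈ q j, a ≠ b →
      a ∉ c σ → b ∉ c σ → a ∈ c (insert b σ) → b ∉ c (insert a σ)) := by
  have hI : RegularLinearQuotient u q g :=
    ⟨hq, hg, fun j y hy => by
      convert hreg j y hy using 3
      funext t
      simp [mulVars_apply]⟩
  have hc' : ∀ σ ⊆ q j,
      IsGreatest {τ | τ ⊆ q j ∧ g (mulVars (u j) τ) = g (mulVars (u j) σ)} (c σ) :=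
    fun σ hσ => ⟨⟨(hc σ hσ).1, (hc σ hσ).2.1⟩, fun τ hτ => (hc σ hσ).2.2 τ hτ.1 hτ.2⟩
  have subset_c : ∀ σ ⊆ q j, σ ⊆ c σ := fun σ hσ => (hc' σ hσ).2 ⟨hσ, rfl⟩
  refine ⟨subset_c, fun σ τ hστ hτ => hI.closure_mono hc' hστ hτ, fun σ hσ => ?_,
    fun σ hσ a haq b hbq hab ha hb => hI.closure_anti_exchange hc' hσ haq hbq hab ha hb⟩
  obtain ⟨⟨hcq, hcg⟩, hcmax⟩ := hc' σ hσ
  exact (hcmax ⟨(hc' _ hcq).1.1, (hc' _ hcq).1.2.trans hcg⟩).antisymm (subset_c _ hcq)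
end

section
/- Let I ⊂ S be a monomial ideal with a linear quotient and μ a monomial in S. Then the restricted ideal I_{≤μ}, generated by those minimal generators of I that divide μ, also has a linear quotient; more precisely, the restriction of any admissible order of G(I) to the generators dividing μ is an admissible order of I_{≤μ}. -/
/-!
Write `⟨u i : P i⟩ : v = ⟨x : x ∈ Q⟩`. For a generator `u i` dividing `μ`, the monomial
`u i : v` lies in the colon ideal, so it is divisible by some `x ∈ Q`; then `x` divides
`u i`, hence `μ`, more often than it divides `v`. Conversely, if `x ∈ Q` and `x * v` divides `μ`,
the generator `u i` with `u i ∣ x * v` divides `μ` as well. Hence the colon ideal of the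
restricted generators is generated by the variables `x ∈ Q` with `x * v ∣ μ`.
-/

variable {ι σ : Type*}

/-- Monomials are exponent vectors `σ → ℕ`; this says `⟨u i : P i⟩ : v = ⟨x : x ∈ Q⟩`. -/
def ColonEqSpanVariables (P : ι → Prop) (u : ι → σ → ℕ) (v : σ → ℕ) (Q : Finset σ) : Prop :=
  ∀ w : σ → ℕ, (∃ i, P i ∧ ∀ t, u i t ≤ w t + v t) ↔ ∃ x ∈ Q, 1 ≤ w x

namespace ColonEqSpanVariables

variable {P : ι → Prop} {u : ι → σ → ℕ} {v : σ → ℕ} {Q : Finset σ}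

theorem exists_mem_lt (h : ColonEqSpanVariables P u v Q) {i : ι} (hi : P i) :
    ∃ x ∈ Q, v x < u i x := by
  obtain ⟨x, hxQ, hx⟩ := (h fun t => u i t - v t).mp ⟨i, hi, fun t => by omega⟩
  exact ⟨x, hxQ, by omega⟩

theorem exists_le_add_single (h : ColonEqSpanVariables P u v Q) {x : σ} (hx : x ∈ Q) :
    ∃ i, P i ∧ u i x ≤ v x + 1 ∧ ∀ t, t ≠ x → u i t ≤ v t := by
  classical
  obtain ⟨i, hi, hle⟩ := (h (Pi.single x 1)).mpr ⟨x, hx, by simp⟩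
  refine ⟨i, hi, by simpa [add_comm] using hle x, fun t ht => by simpa [ht] using hle t⟩

theorem restrict (h : ColonEqSpanVariables P u v Q) {μ : σ → ℕ} (hv : ∀ t, v t ≤ μ t) :
    ColonEqSpanVariables (fun i => P i ∧ ∀ t, u i t ≤ μ t) u v
      (Q.filter fun x => v x < μ x) := by
  intro w
  simp only [Finset.mem_filter, and_assoc]
  constructor
  · rintro ⟨i, hi, hiμ, hiw⟩
    obtain ⟨x, hxQ, hx⟩ := h.exists_mem_lt hi
    exact ⟨x, hxQ, hx.trans_le (hiμ x), by linarith [hiw x]⟩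
  · rintro ⟨x, hxQ, hxμ, hwx⟩
    obtain ⟨i, hi, hix, hit⟩ := h.exists_le_add_single hxQ
    refine ⟨i, hi, fun t => ?_, fun t => ?_⟩ <;> rcases eq_or_ne t x with rfl | ht
    · omega
    · exact (hit t ht).trans (hv t)
    · omega
    · linarith [hit t ht]

end ColonEqSpanVariables

/-- If `u` is an admissible order of the generators of a monomial ideal
(monomials are exponent vectors `Fin n → ℕ`), then for any monomial `μ` the
restriction of the order to the generators dividing `μ` is an admissible
order of the restricted ideal `I_{≤μ}`. -/
theorem restriction_admissible (n m : ℕ) (u : Fin m → Fin n → ℕ)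
    (hadm : ∀ j : Fin m, ∃ Q : Finset (Fin n), ∀ w : Fin n → ℕ,
      ((∃ i, i < j ∧ ∀ t, u i t ≤ w t + u j t) ↔ ∃ x ∈ Q, 1 ≤ w x))
    (μ : Fin n → ℕ) :
    ∀ j : Fin m, (∀ t, u j t ≤ μ t) →
      ∃ Q : Finset (Fin n), ∀ w : Fin n → ℕ,
        ((∃ i, i < j ∧ (∀ t, u i t ≤ μ t) ∧ ∀ t, u i t ≤ w t + u j t)
          ↔ ∃ x ∈ Q, 1 ≤ w x) := by
  intro j hjμ
  obtain ⟨Q, hQ⟩ := hadm j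
  have hQ' : ColonEqSpanVariables (· < j) u (u j) Q := hQ
  exact ⟨_, fun w => by simpa only [and_assoc] using hQ'.restrict hjμ w⟩
end

section
/- Let I ⊂ S be a monomial ideal with a regular linear quotient and μ a monomial. Then I_{≤μ} has a regular linear quotient; that is, the decomposition function 𝔤' of I_{≤μ} associated to the restricted admissible order is regular: 𝔮'(𝔤'(y v)) ⊆ 𝔮'(v) for all minimal generators v of I_{≤μ} and all y ∈ 𝔮'(v). -/
/-!
For `u_j ∣ μ` the quotient set of `u_j` in `I_{≤μ}` is `{x ∈ 𝔮(u_j) : x u_j ∣ μ}`, and the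
restricted decomposition function is `v ↦ 𝔤(gcd(v, μ))`. For a variable `y` of this set,
`y u_j` divides `μ`, so `𝔤'(y u_j) = 𝔤(y u_j)` and regularity of `𝔤` gives
`𝔮(𝔤(y u_j)) ⊆ 𝔮(u_j)`. It remains to see that a variable `z ∈ 𝔮(𝔤(v))` with
`z 𝔤(v) ∣ μ` also satisfies `z v ∣ μ` when `v ∣ μ`: otherwise the generator `u_k`,
`k < 𝔤(v)`, dividing `z 𝔤(v)` would already divide `v`, against the minimality of `𝔤(v)`.
-/

namespace Pi

theorem single_one_le_iff {σ : Type*} [DecidableEq σ] {w : σ → ℕ} {x : σ} :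
    Pi.single x 1 ≤ w ↔ 1 ≤ w x := by
  refine ⟨fun h => by simpa using h x, fun h t => ?_⟩
  by_cases ht : t = x
  · subst ht; simpa using h
  · simp [ht]

theorem add_single_one_le_iff {σ : Type*} [DecidableEq σ] {a b : σ → ℕ} {x : σ} (hab : a ≤ b) :
    a + Pi.single x 1 ≤ b ↔ a x < b x := by
  refine ⟨fun h => by simpa using h x, fun h t => ?_⟩
  by_cases ht : t = x
  · subst ht; simpa using h
  · simpa [Pi.single_apply, ht] using hab t

end Pi

section RestrictedLinearQuotient

variable {σ κ : Type*} {u : κ → σ → ℕ} {q : κ → Finset σ}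
  {g : (σ → ℕ) → κ} {μ : σ → ℕ}

variable (u q μ) in
def restrictedQuotient (j : κ) : Finset σ :=
  (q j).filter (fun x => u j x < μ x)

variable (g μ) in
def restrictedDecomp (v : σ → ℕ) : κ :=
  g (v ⊓ μ)

theorem mem_restrictedQuotient {j : κ} {x : σ} :
    x ∈ restrictedQuotient u q μ j ↔ x ∈ q j ∧ u j x < μ x :=
  Finset.mem_filter

theorem restrictedQuotient_spec [DecidableEq σ] [Preorder κ]
    (hq : ∀ j w, (∃ i < j, u i ≤ w + u j) ↔ ∃ x ∈ q j, 1 ≤ w x)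
    {j : κ} (hj : u j ≤ μ) (w : σ → ℕ) :
    (∃ i < j, u i ≤ μ ∧ u i ≤ w + u j) ↔ ∃ x ∈ restrictedQuotient u q μ j, 1 ≤ w x := by
  simp only [mem_restrictedQuotient]
  constructor
  · rintro ⟨i, hij, hiμ, hiw⟩
    -- shrink `w` to the part of it that still fits into `μ` on top of `u j`
    have hiw' : u i ≤ w ⊓ (μ - u j) + u j := fun t => by
      have := hiμ t; have := hiw t; have := hj t
      simp only [Pi.add_apply, Pi.inf_apply, Pi.sub_apply] at *
      omega
    obtain ⟨x, hx, hwx⟩ := (hq j _).mp ⟨i, hij, hiw'⟩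
    simp only [Pi.inf_apply, Pi.sub_apply, le_inf_iff] at hwx
    exact ⟨x, ⟨hx, by omega⟩, hwx.1⟩
  · rintro ⟨x, ⟨hx, hxμ⟩, hwx⟩
    obtain ⟨k, hkj, hk⟩ := (hq j (Pi.single x 1)).mpr ⟨x, hx, by simp⟩
    refine ⟨k, hkj, ?_, ?_⟩
    · exact hk.trans ((add_comm _ _).trans_le ((Pi.add_single_one_le_iff hj).mpr hxμ))
    · exact hk.trans (add_le_add_left (Pi.single_one_le_iff.mpr hwx) _)

theorem restrictedDecomp_spec [Preorder κ]
    (hg : ∀ v, (∃ i, u i ≤ v) → u (g v) ≤ v ∧ ∀ i, u i ≤ v → g v ≤ i)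
    {v : σ → ℕ} (hv : ∃ i, u i ≤ μ ∧ u i ≤ v) :
    u (restrictedDecomp g μ v) ≤ μ ∧ u (restrictedDecomp g μ v) ≤ v ∧
      ∀ i, u i ≤ μ → u i ≤ v → restrictedDecomp g μ v ≤ i := by
  obtain ⟨i, hiμ, hiv⟩ := hv
  obtain ⟨hle, hmin⟩ := hg (v ⊓ μ) ⟨i, le_inf hiv hiμ⟩
  exact ⟨(le_inf_iff.mp hle).2, (le_inf_iff.mp hle).1,
    fun k hkμ hkv => hmin k (le_inf hkv hkμ)⟩

theorem lt_of_mem_quotient_decomp [DecidableEq σ] [Preorder κ]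
    (hq : ∀ j w, (∃ i < j, u i ≤ w + u j) ↔ ∃ x ∈ q j, 1 ≤ w x)
    (hg : ∀ v, (∃ i, u i ≤ v) → u (g v) ≤ v ∧ ∀ i, u i ≤ v → g v ≤ i)
    {v : σ → ℕ} (hv : ∃ i, u i ≤ v) (hvμ : v ≤ μ) {z : σ} (hz : z ∈ q (g v))
    (hzμ : u (g v) z < μ z) : v z < μ z := by
  obtain ⟨hgv, hmin⟩ := hg v hv
  obtain ⟨k, hk, hkz⟩ := (hq (g v) (Pi.single z 1)).mpr ⟨z, hz, by simp⟩
  by_contra hvz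
  have hkv : u k ≤ v := fun t => by
    have := hkz t; have := hgv t; have := hvμ z
    by_cases ht : t = z
    · subst ht; simp only [Pi.add_apply, Pi.single_eq_same] at *; omega
    · simp only [Pi.add_apply, Pi.single_apply, ht, if_false] at *; omega
  exact (hk.trans_le (hmin k hkv)).false

theorem restrictedQuotient_regular [DecidableEq σ] [Preorder κ]
    (hq : ∀ j w, (∃ i < j, u i ≤ w + u j) ↔ ∃ x ∈ q j, 1 ≤ w x)
    (hg : ∀ v, (∃ i, u i ≤ v) → u (g v) ≤ v ∧ ∀ i, u i ≤ v → g v ≤ i)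
    (hreg : ∀ j, ∀ y ∈ q j, q (g (u j + Pi.single y 1)) ⊆ q j)
    {j : κ} (hj : u j ≤ μ) {y : σ} (hy : y ∈ restrictedQuotient u q μ j) :
    restrictedQuotient u q μ (restrictedDecomp g μ (u j + Pi.single y 1)) ⊆
      restrictedQuotient u q μ j := by
  obtain ⟨hyq, hyμ⟩ := mem_restrictedQuotient.mp hy
  set v := u j + Pi.single y 1
  have hvμ : v ≤ μ := (Pi.add_single_one_le_iff hj).mpr hyμ
  have hv : ∃ i, u i ≤ v := by
    obtain ⟨k, _, hk⟩ := (hq j (Pi.single y 1)).mpr ⟨y, hyq, by simp⟩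
    exact ⟨k, hk.trans_eq (add_comm _ _)⟩
  rw [restrictedDecomp, inf_eq_left.mpr hvμ]
  intro z hz
  obtain ⟨hzq, hzμ⟩ := mem_restrictedQuotient.mp hz
  have hvz := lt_of_mem_quotient_decomp hq hg hv hvμ hzq hzμ
  exact mem_restrictedQuotient.mpr
    ⟨hreg j y hyq hzq, (Nat.le_add_right _ _).trans_lt hvz⟩

end RestrictedLinearQuotient

/-- If `I` has a regular linear quotient (admissible order `u`, quotient sets
`q`, regular decomposition function `g`), then for any monomial `μ` the
restricted ideal `I_{≤μ}` (generated by the generators dividing `μ`, with the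
restricted order) also has a regular linear quotient: there are quotient sets
`q'` and a decomposition function `g'` for the restricted order which are
admissible and regular. -/
theorem restriction_regular (n m : ℕ) (u : Fin m → Fin n → ℕ)
    (q : Fin m → Finset (Fin n)) (g : (Fin n → ℕ) → Fin m)
    (hq : ∀ j : Fin m, ∀ w : Fin n → ℕ,
      ((∃ i, i < j ∧ ∀ t, u i t ≤ w t + u j t) ↔ ∃ x ∈ q j, 1 ≤ w x))
    (hg : ∀ v : Fin n → ℕ, (∃ i, ∀ t, u i t ≤ v t) →
      ((∀ t, u (g v) t ≤ v t) ∧ ∀ i, (∀ t, u i t ≤ v t) → g v ≤ i))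
    (hreg : ∀ j : Fin m, ∀ y ∈ q j,
      q (g (fun t => u j t + if t = y then 1 else 0)) ⊆ q j)
    (μ : Fin n → ℕ) :
    ∃ (q' : Fin m → Finset (Fin n)) (g' : (Fin n → ℕ) → Fin m),
      (∀ j : Fin m, (∀ t, u j t ≤ μ t) → ∀ w : Fin n → ℕ,
        ((∃ i, i < j ∧ (∀ t, u i t ≤ μ t) ∧ ∀ t, u i t ≤ w t + u j t)
          ↔ ∃ x ∈ q' j, 1 ≤ w x)) ∧
      (∀ v : Fin n → ℕ, (∃ i, (∀ t, u i t ≤ μ t) ∧ ∀ t, u i t ≤ v t) →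
        ((∀ t, u (g' v) t ≤ μ t) ∧ (∀ t, u (g' v) t ≤ v t) ∧
          ∀ i, (∀ t, u i t ≤ μ t) → (∀ t, u i t ≤ v t) → g' v ≤ i)) ∧
      (∀ j : Fin m, (∀ t, u j t ≤ μ t) → ∀ y ∈ q' j,
        q' (g' (fun t => u j t + if t = y then 1 else 0)) ⊆ q' j) := by
  have hsingle : ∀ (j : Fin m) (y : Fin n),
      (fun t => u j t + if t = y then 1 else 0) = u j + Pi.single y 1 := fun j y => by
    ext t; simp [Pi.single_apply]
  have hreg' : ∀ j, ∀ y ∈ q j, q (g (u j + Pi.single y 1)) ⊆ q j := fun j y hy => by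
    simpa only [hsingle] using hreg j y hy
  refine ⟨restrictedQuotient u q μ, restrictedDecomp g μ,
    fun j hj w => restrictedQuotient_spec hq hj w,
    fun v hv => restrictedDecomp_spec hg hv, fun j hj y hy => ?_⟩
  rw [hsingle]
  exact restrictedQuotient_regular hq hg hreg' hj hy
end

section
/- Let I be a monomial ideal with a regular linear quotient and decomposition function 𝔤. For any u ∈ G(I) and any y, z ∈ 𝔮(u), we have 𝔤(y·𝔤(zu)) = 𝔤(z·𝔤(yu)). -/
/-!
Monomials are exponent vectors `σ → ℕ`, divisibility is the pointwise order and the variable `y`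
is `Pi.single y 1`.

Both sides equal `𝔤(yz·u)`, because `𝔤(y·𝔤(w)) = 𝔤(y·w)` for every monomial `w ∈ I`. Write
`u_a = 𝔤(w)`. Minimality of `a` forces `w` and `u_a` to agree in the variables of `𝔮(u_a)`, so `y·w`
and `y·u_a` agree there too. If `𝔤(y·w)` came strictly before `u_L = 𝔤(y·u_a)`, it would come before
`u_a`, which is only possible when `y ∈ 𝔮(u_a)`. Regularity then gives `𝔮(u_L) ⊆ 𝔮(u_a)`, so some
`x ∈ 𝔮(u_L)` has a higher exponent in `y·w`, hence in `y·u_a`, than in `u_L`; this places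
`𝔤(y·u_a)` strictly before `u_L`, a contradiction.
-/

namespace LinearQuotient

variable {σ ι : Type*} [LinearOrder ι]

/-- `⟨u_i : i < j⟩ : u_j = ⟨𝔮(u_j)⟩`, tested on monomials `w`. -/
def HasLinearQuotients (u : ι → σ → ℕ) (q : ι → Finset σ) : Prop :=
  ∀ j w, (∃ i < j, u i ≤ w + u j) ↔ ∃ x ∈ q j, 1 ≤ w x

def IsDecompositionFunction (u : ι → σ → ℕ) (g : (σ → ℕ) → ι) : Prop :=
  ∀ v, (∃ i, u i ≤ v) → u (g v) ≤ v ∧ ∀ i, u i ≤ v → g v ≤ i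

variable {u : ι → σ → ℕ} {q : ι → Finset σ} {g : (σ → ℕ) → ι}

theorem IsDecompositionFunction.lt_iff_exists_le (hg : IsDecompositionFunction u g)
    {v : σ → ℕ} (hv : ∃ i, u i ≤ v) (k : ι) : g v < k ↔ ∃ i < k, u i ≤ v :=
  ⟨fun h => ⟨g v, h, (hg v hv).1⟩, fun ⟨_, hik, hi⟩ => ((hg v hv).2 _ hi).trans_lt hik⟩

theorem decomp_lt_iff (hq : HasLinearQuotients u q) (hg : IsDecompositionFunction u g)
    {v : σ → ℕ} {k : ι} (hk : u k ≤ v) : g v < k ↔ ∃ x ∈ q k, u k x < v x := by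
  rw [hg.lt_iff_exists_le ⟨k, hk⟩, ← tsub_add_cancel_of_le hk, hq k (v - u k),
    tsub_add_cancel_of_le hk]
  simp only [Pi.sub_apply, Nat.one_le_iff_ne_zero, Nat.sub_ne_zero_iff_lt]

theorem decomp_apply_eq (hq : HasLinearQuotients u q) (hg : IsDecompositionFunction u g)
    {v : σ → ℕ} (hv : ∃ i, u i ≤ v) {x : σ} (hx : x ∈ q (g v)) : u (g v) x = v x :=
  ((hg v hv).1 x).antisymm <| not_lt.1 fun hlt =>
    lt_irrefl _ ((decomp_lt_iff hq hg (hg v hv).1).2 ⟨x, hx, hlt⟩)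

theorem decomp_add_single_decomp [DecidableEq σ] (hq : HasLinearQuotients u q)
    (hg : IsDecompositionFunction u g)
    (hreg : ∀ j, ∀ y ∈ q j, q (g (u j + Pi.single y 1)) ⊆ q j)
    {w : σ → ℕ} (hw : ∃ i, u i ≤ w) (y : σ) :
    g (u (g w) + Pi.single y 1) = g (w + Pi.single y 1) := by
  set a := g w
  have hwa : u a ≤ w := (hg w hw).1
  have hL : ∃ i, u i ≤ u a + Pi.single y 1 := ⟨a, le_self_add⟩
  set L := g (u a + Pi.single y 1)
  have hLv : u L ≤ w + Pi.single y 1 := (hg _ hL).1.trans (add_le_add_left hwa _)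
  refine le_antisymm ?_ ((hg _ ⟨a, hwa.trans le_self_add⟩).2 _ hLv)
  by_contra! hcL
  have agree : ∀ x ∈ q a,
      (w + Pi.single y 1 : σ → ℕ) x = (u a + Pi.single y 1 : σ → ℕ) x := fun x hx => by
    rw [Pi.add_apply, Pi.add_apply, ← decomp_apply_eq hq hg hw hx]
  have hya : y ∈ q a := by
    have hca := hcL.trans_le ((hg _ hL).2 a le_self_add)
    obtain ⟨x, hx, hlt⟩ := (decomp_lt_iff hq hg (hwa.trans le_self_add)).1 hca
    rw [agree x hx, Pi.add_apply, Pi.single_apply] at hlt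
    split_ifs at hlt with hxy
    · exact hxy ▸ hx
    · exact (lt_irrefl _ hlt).elim
  obtain ⟨x, hx, hlt⟩ := (decomp_lt_iff hq hg hLv).1 hcL
  rw [agree x (hreg a y hya hx)] at hlt
  exact lt_irrefl _ ((decomp_lt_iff hq hg (hg _ hL).1).2 ⟨x, hx, hlt⟩)

end LinearQuotient

theorem decomposition_commute_general (n m : ℕ) (u : Fin m → Fin n → ℕ)
    (q : Fin m → Finset (Fin n)) (g : (Fin n → ℕ) → Fin m)
    (hq : ∀ j : Fin m, ∀ w : Fin n → ℕ,
      ((∃ i, i < j ∧ ∀ t, u i t ≤ w t + u j t) ↔ ∃ x ∈ q j, 1 ≤ w x))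
    (hg : ∀ v : Fin n → ℕ, (∃ i, ∀ t, u i t ≤ v t) →
      ((∀ t, u (g v) t ≤ v t) ∧ ∀ i, (∀ t, u i t ≤ v t) → g v ≤ i))
    (hreg : ∀ j : Fin m, ∀ y ∈ q j,
      q (g (fun t => u j t + if t = y then 1 else 0)) ⊆ q j)
    (j : Fin m) (y z : Fin n) :
    g (fun t => u (g (fun s => u j s + if s = z then 1 else 0)) t
        + if t = y then 1 else 0)
      = g (fun t => u (g (fun s => u j s + if s = y then 1 else 0)) t
        + if t = z then 1 else 0) := by
  have hsingle : ∀ (v : Fin n → ℕ) (x : Fin n),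
      (fun t => v t + if t = x then 1 else 0) = v + Pi.single x 1 := fun v x => by
    funext t
    simp [Pi.single_apply]
  simp only [hsingle] at hreg ⊢
  have hdiv : ∀ x, ∃ i, u i ≤ u j + Pi.single x 1 := fun _ => ⟨j, le_self_add⟩
  rw [LinearQuotient.decomp_add_single_decomp hq hg hreg (hdiv z),
    LinearQuotient.decomp_add_single_decomp hq hg hreg (hdiv y), add_right_comm]

/-- For an ideal with a regular linear quotient, the decomposition function
satisfies `𝔤(y·𝔤(z·u)) = 𝔤(z·𝔤(y·u))` for all `y, z ∈ 𝔮(u)`.  Monomials are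
exponent vectors, `g` is index valued. -/
theorem decomposition_commute (n m : ℕ) (u : Fin m → Fin n → ℕ)
    (q : Fin m → Finset (Fin n)) (g : (Fin n → ℕ) → Fin m)
    (hq : ∀ j : Fin m, ∀ w : Fin n → ℕ,
      ((∃ i, i < j ∧ ∀ t, u i t ≤ w t + u j t) ↔ ∃ x ∈ q j, 1 ≤ w x))
    (hg : ∀ v : Fin n → ℕ, (∃ i, ∀ t, u i t ≤ v t) →
      ((∀ t, u (g v) t ≤ v t) ∧ ∀ i, (∀ t, u i t ≤ v t) → g v ≤ i))
    (hreg : ∀ j : Fin m, ∀ y ∈ q j,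
      q (g (fun t => u j t + if t = y then 1 else 0)) ⊆ q j)
    (j : Fin m) (y z : Fin n) (hy : y ∈ q j) (hz : z ∈ q j) :
    g (fun t => u (g (fun s => u j s + if s = z then 1 else 0)) t
        + if t = y then 1 else 0)
      = g (fun t => u (g (fun s => u j s + if s = y then 1 else 0)) t
        + if t = z then 1 else 0) :=
  decomposition_commute_general n m u q g hq hg hreg j y z
end

section
/- Every monomial ideal I with a linear quotient admits a degree increasing admissible order: there is an ordering u_1,...,u_m of G(I) which is admissible and satisfies deg(u_1) ≤ deg(u_2) ≤ ... ≤ deg(u_m). -/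
/-!
Sort the generators by degree with bubble sort. Swapping adjacent generators `u_a, u_b` with
`deg u_b < deg u_a` preserves linear quotients. Since `u_a` cannot divide `x * u_b` for a variable
`x` (it would then equal `x * u_b` and `u_b` would divide it), `u_a` is never needed to generate the
colon ideal at `u_b`. In the new colon ideal `⟨S, u_b⟩ : u_a`, the old colon ideal at `u_b`
provides `u_k ∈ S` dividing `lcm(u_a, u_b)`, and a variable of `⟨S⟩ : u_a` dividing
`u_k / gcd(u_k, u_a)` then also divides `u_b / gcd(u_b, u_a)`.
-/

open Finset Equiv

section Monomials

variable {ι : Type*} [DecidableEq ι]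

/-- Monomials are exponent vectors `ι → ℕ`, ordered by divisibility. The colon ideal `⟨S⟩ : u` is
generated by the `s / gcd(s, u)`, `s ∈ S`; it is generated by variables iff each of these is
divisible by a variable `x` with `x * u ∈ ⟨S⟩`. -/
def LinearColon (S : Set (ι → ℕ)) (u : ι → ℕ) : Prop :=
  ∀ s ∈ S, ∃ x, u x < s x ∧ ∃ s' ∈ S, s' ≤ Pi.single x 1 + u

theorem linearColon_iff_exists_vars [Fintype ι] {S : Set (ι → ℕ)} {u : ι → ℕ} :
    LinearColon S u ↔
      ∃ Q : Finset ι, ∀ w : ι → ℕ, (∃ s ∈ S, s ≤ w + u) ↔ ∃ x ∈ Q, 1 ≤ w x := by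
  classical
  constructor
  · intro h
    refine ⟨univ.filter fun x => ∃ s' ∈ S, s' ≤ Pi.single x 1 + u, fun w => ⟨?_, ?_⟩⟩
    · rintro ⟨s, hs, hsw⟩
      obtain ⟨x, hx, hxS⟩ := h s hs
      have hsx := hsw x
      exact ⟨x, by simpa using hxS, by simp only [Pi.add_apply] at hsx; omega⟩
    · rintro ⟨x, hx, hwx⟩
      obtain ⟨s', hs', hle⟩ := (mem_filter.1 hx).2
      refine ⟨s', hs', hle.trans (add_le_add_left (fun t => ?_) u)⟩
      rcases eq_or_ne t x with rfl | ht
      · simpa using hwx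
      · simp [ht]
  · rintro ⟨Q, hQ⟩ s hs
    obtain ⟨x, hxQ, hx⟩ := (hQ (s - u)).1 ⟨s, hs, le_tsub_add⟩
    obtain ⟨s', hs', hle⟩ := (hQ (Pi.single x 1)).2 ⟨x, hxQ, by simp⟩
    exact ⟨x, by simp only [Pi.sub_apply] at hx; omega, s', hs', hle⟩

theorem not_le_single_add_of_sum_lt [Fintype ι] {a b : ι → ℕ} (hdeg : ∑ t, b t < ∑ t, a t)
    (hba : ¬ b ≤ a) (x : ι) : ¬ a ≤ Pi.single x 1 + b := by
  intro h
  rcases h.lt_or_eq with hlt | rfl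
  · have := Fintype.sum_strictMono hlt
    simp only [Pi.add_apply, sum_add_distrib, sum_pi_single', mem_univ, if_true] at this
    omega
  · exact hba le_add_self

theorem LinearColon.of_insert {S : Set (ι → ℕ)} {a b : ι → ℕ} (hb : LinearColon (insert a S) b)
    (ha_ndvd : ∀ x, ¬ a ≤ Pi.single x 1 + b) : LinearColon S b := by
  intro s hs
  obtain ⟨x, hx, s', hs', hle⟩ := hb s (Set.mem_insert_of_mem a hs)
  rcases hs' with rfl | hs'
  · exact absurd hle (ha_ndvd x)
  · exact ⟨x, hx, s', hs', hle⟩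

theorem LinearColon.insert_of_insert {S : Set (ι → ℕ)} {a b : ι → ℕ} (ha : LinearColon S a)
    (hb : LinearColon (insert a S) b) (ha_ndvd : ∀ x, ¬ a ≤ Pi.single x 1 + b) :
    LinearColon (insert b S) a := by
  rintro s (rfl | hs)
  · obtain ⟨y, hy, k, hk, hky⟩ := hb a (Set.mem_insert a S)
    rcases hk with rfl | hkS
    · exact absurd hky (ha_ndvd y)
    have hk_lcm : ∀ t, k t ≤ max (a t) (s t) := fun t => by
      have hkt := hky t
      rcases eq_or_ne t y with rfl | ht
      · simp only [Pi.add_apply, Pi.single_eq_same] at hkt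
        omega
      · simp only [Pi.add_apply, Pi.single_eq_of_ne ht, zero_add] at hkt
        omega
    obtain ⟨x, hx, k', hk', hle⟩ := ha k hkS
    have := hk_lcm x
    exact ⟨x, by omega, k', Set.mem_insert_of_mem s hk', hle⟩
  · obtain ⟨x, hx, s', hs', hle⟩ := ha s hs
    exact ⟨x, hx, s', Set.mem_insert_of_mem b hs', hle⟩

def LinearQuotients {κ : Type*} [Preorder κ] (v : κ → ι → ℕ) : Prop :=
  ∀ p, LinearColon (v '' Set.Iio p) (v p)

theorem linearQuotients_iff [Fintype ι] {κ : Type*} [Preorder κ] {v : κ → ι → ℕ} :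
    LinearQuotients v ↔
      ∀ j, ∃ Q : Finset ι, ∀ w : ι → ℕ, (∃ i < j, v i ≤ w + v j) ↔ ∃ x ∈ Q, 1 ≤ w x := by
  simp only [LinearQuotients, linearColon_iff_exists_vars, Set.exists_mem_image, Set.mem_Iio]

theorem Set.image_swap_eq_self {α : Type*} [DecidableEq α] {s : Set α} {a b : α}
    (h : a ∈ s ↔ b ∈ s) : swap a b '' s = s := by
  ext x
  rw [image_eq_preimage_symm, symm_swap, Set.mem_preimage, swap_apply_def]
  split_ifs <;> simp_all

theorem LinearQuotients.comp_swap [Fintype ι] {κ : Type*} [LinearOrder κ] {v : κ → ι → ℕ}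
    (h : LinearQuotients v) {a b : κ} (hab : a ⋖ b) (hdeg : ∑ t, v b t < ∑ t, v a t)
    (hba : ¬ v b ≤ v a) : LinearQuotients (v ∘ swap a b) := by
  have hdiv := not_le_single_add_of_sum_lt hdeg hba
  have hIio_b : Set.Iio b = insert a (Set.Iio a) := by rw [hab.Iio_eq, Set.Iio_insert]
  have hb : LinearColon (insert (v a) (v '' Set.Iio a)) (v b) := by
    simpa only [hIio_b, Set.image_insert_eq] using h b
  have hswap_Iio_a : swap a b '' Set.Iio a = Set.Iio a :=
    Set.image_swap_eq_self (by simp [hab.lt.le])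
  intro p
  rcases eq_or_ne p b with rfl | hpb
  · rw [Set.image_comp, hIio_b, Set.image_insert_eq, swap_apply_left, hswap_Iio_a,
      Set.image_insert_eq, Function.comp_apply, swap_apply_right]
    exact (h a).insert_of_insert hb hdiv
  have hswap_Iio_p : swap a b '' Set.Iio p = Set.Iio p :=
    Set.image_swap_eq_self <| by
      simp only [Set.mem_Iio]
      exact ⟨fun hap => (hab.ge_of_gt hap).lt_of_ne hpb.symm, hab.lt.trans⟩
  rw [Set.image_comp, hswap_Iio_p, Function.comp_apply]
  rcases eq_or_ne p a with rfl | hpa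
  · rw [swap_apply_left]
    exact hb.of_insert hdiv
  · rw [swap_apply_of_ne_of_ne hpa hpb]
    exact h p

end Monomials

theorem Fin.sum_val_mul_lt_sum_val_mul_comp_swap {m : ℕ} {g : Fin m → ℕ} {a b : Fin m}
    (hab : a ⋖ b) (hg : g b < g a) :
    ∑ i : Fin m, (i : ℕ) * g i < ∑ i : Fin m, (i : ℕ) * g (swap a b i) := by
  have hb : (b : ℕ) = a + 1 := (Nat.covBy_iff_add_one_eq.1 (Fin.covBy_iff.1 hab)).symm
  have hreindex : ∑ i : Fin m, (i : ℕ) * g (swap a b i) = ∑ i, (swap a b i : ℕ) * g i := by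
    simpa using (Equiv.sum_comp (swap a b) fun i => (swap a b i : ℕ) * g i)
  have hdiff :
      ∑ i, ((swap a b i : ℕ) * g i : ℤ) - ∑ i : Fin m, ((i : ℕ) * g i : ℤ) = g a - g b := by
    rw [← sum_sub_distrib, Fintype.sum_eq_add a b hab.ne fun i hi => by
      simp [swap_apply_of_ne_of_ne hi.1 hi.2]]
    simp only [swap_apply_left, swap_apply_right, hb, Nat.cast_add, Nat.cast_one]
    ring
  rw [hreindex]
  zify
  linarith

theorem Fin.exists_perm_monotone_of_swap {α : Type*} {m : ℕ} (P : (Fin m → α) → Prop)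
    (f : α → ℕ) (hswap : ∀ w, P w → ∀ a b, a ⋖ b → f (w b) < f (w a) → P (w ∘ swap a b))
    {v : Fin m → α} (hv : P v) : ∃ π : Perm (Fin m), P (v ∘ π) ∧ Monotone (f ∘ v ∘ π) := by
  classical
  -- A maximiser of `∑ i * f (v (π i))` has no adjacent descent, since swapping one increases it.
  obtain ⟨π, hπ, hmax⟩ := (univ.filter fun π : Perm (Fin m) => P (v ∘ π)).exists_max_image
    (fun π => ∑ i : Fin m, (i : ℕ) * f (v (π i))) ⟨1, by simpa using hv⟩
  rw [mem_filter] at hπ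
  refine ⟨π, hπ.2, (monotone_iff_forall_covBy _).2 fun a b hab => not_lt.1 fun hlt => ?_⟩
  have hmem : π * swap a b ∈ univ.filter fun π : Perm (Fin m) => P (v ∘ π) := by
    simpa [Perm.coe_mul, ← Function.comp_assoc] using hswap _ hπ.2 a b hab hlt
  exact (hmax _ hmem).not_gt
    (Fin.sum_val_mul_lt_sum_val_mul_comp_swap (g := fun i => f (v (π i))) hab hlt)

/-- Every monomial ideal with a linear quotient admits a degree increasing
admissible order: if `u` is an admissible order of the minimal generators
(monomials are exponent vectors), then some reordering `u ∘ π` is admissible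
and has weakly increasing total degrees. -/
theorem degree_increasing_admissible (n m : ℕ) (u : Fin m → Fin n → ℕ)
    (hmin : ∀ i j : Fin m, i ≠ j → ¬ (∀ t, u i t ≤ u j t))
    (hadm : ∀ j : Fin m, ∃ Q : Finset (Fin n), ∀ w : Fin n → ℕ,
      ((∃ i, i < j ∧ ∀ t, u i t ≤ w t + u j t) ↔ ∃ x ∈ Q, 1 ≤ w x)) :
    ∃ π : Equiv.Perm (Fin m),
      (∀ j : Fin m, ∃ Q : Finset (Fin n), ∀ w : Fin n → ℕ,
        ((∃ i, i < j ∧ ∀ t, u (π i) t ≤ w t + u (π j) t) ↔ ∃ x ∈ Q, 1 ≤ w x)) ∧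
      (∀ i j : Fin m, i ≤ j → (∑ t, u (π i) t) ≤ ∑ t, u (π j) t) := by
  obtain ⟨π, ⟨-, hπ⟩, hmono⟩ := Fin.exists_perm_monotone_of_swap
    (fun w => Pairwise (fun i j => ¬ w i ≤ w j) ∧ LinearQuotients w) (fun a => ∑ t, a t)
    (fun _ ⟨hw, hlin⟩ a b hab hdeg =>
      ⟨hw.comp_of_injective (swap a b).injective, hlin.comp_swap hab hdeg (hw hab.ne')⟩)
    (v := u) ⟨hmin, linearQuotients_iff.2 hadm⟩
  exact ⟨π, linearQuotients_iff.1 hπ, fun i j hij => hmono hij⟩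
end

section
/- Let I be a monomial ideal with admissible order u_1,...,u_m, decomposition function 𝔤, and let u ∈ G(I), y ∈ 𝔮(u). Then 𝔤(yu) ≠ u, 𝔤(yu) divides yu, and 𝔤(yu) appears strictly earlier than u in the admissible order. -/
theorem exists_lt_le_add_var_of_mem_colon {σ ι : Type*} [DecidableEq σ] [LT ι]
    {u : ι → σ → ℕ} {j : ι} {Q : Finset σ}
    (hQ : ∀ w : σ → ℕ, (∃ x ∈ Q, 1 ≤ w x) → ∃ i, i < j ∧ ∀ t, u i t ≤ w t + u j t)
    {y : σ} (hy : y ∈ Q) :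
    ∃ i, i < j ∧ ∀ t, u i t ≤ u j t + if t = y then 1 else 0 := by
  obtain ⟨i, hij, hi⟩ := hQ (fun t => if t = y then 1 else 0) ⟨y, hy, by simp⟩
  exact ⟨i, hij, fun t => (hi t).trans_eq (Nat.add_comm _ _)⟩

/-- For a monomial ideal with admissible order `u`, quotient sets `q` and
decomposition function `g`, and `y ∈ 𝔮(u_j)`: `𝔤(y·u_j) ≠ u_j`, `𝔤(y·u_j)`
divides `y·u_j`, and `𝔤(y·u_j)` appears strictly earlier in the order. -/
theorem decomposition_earlier (n m : ℕ) (u : Fin m → Fin n → ℕ)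
    (q : Fin m → Finset (Fin n)) (g : (Fin n → ℕ) → Fin m)
    (hq : ∀ j : Fin m, ∀ w : Fin n → ℕ,
      ((∃ i, i < j ∧ ∀ t, u i t ≤ w t + u j t) ↔ ∃ x ∈ q j, 1 ≤ w x))
    (hg : ∀ v : Fin n → ℕ, (∃ i, ∀ t, u i t ≤ v t) →
      ((∀ t, u (g v) t ≤ v t) ∧ ∀ i, (∀ t, u i t ≤ v t) → g v ≤ i))
    (j : Fin m) (y : Fin n) (hy : y ∈ q j) :
    g (fun t => u j t + if t = y then 1 else 0) ≠ j ∧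
    (∀ t, u (g (fun t => u j t + if t = y then 1 else 0)) t
      ≤ u j t + if t = y then 1 else 0) ∧
    g (fun t => u j t + if t = y then 1 else 0) < j := by
  set v : Fin n → ℕ := fun t => u j t + if t = y then 1 else 0
  obtain ⟨i, hij, hiv⟩ := exists_lt_le_add_var_of_mem_colon (fun w => (hq j w).mpr) hy
  obtain ⟨hdvd, hmin⟩ := hg v ⟨i, hiv⟩
  have hlt : g v < j := (hmin i hiv).trans_lt hij
  exact ⟨hlt.ne, hdvd, hlt⟩
end

section
/- Let I be a monomial ideal with a regular linear quotient and let u ∈ G(I), σ ⊆ 𝔮(u), τ ⊆ 𝔮(u). If σ ⊆ τ then 𝔤(τ; u) = 𝔤(τ∖σ; 𝔤(σ; u)); in particular 𝔤(τ;u) divides 𝔤(σ;u)·∏_{y∈τ∖σ} y. -/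
/-- The decomposition function applied to a generator returns its index. -/
lemma g_of_gen {n m : ℕ} (u : Fin m → Fin n → ℕ)
    (q : Fin m → Finset (Fin n)) (g : (Fin n → ℕ) → Fin m)
    (hq : ∀ j : Fin m, ∀ w : Fin n → ℕ,
      ((∃ i, i < j ∧ ∀ t, u i t ≤ w t + u j t) ↔ ∃ x ∈ q j, 1 ≤ w x))
    (hg : ∀ v : Fin n → ℕ, (∃ i, ∀ t, u i t ≤ v t) →
      ((∀ t, u (g v) t ≤ v t) ∧ ∀ i, (∀ t, u i t ≤ v t) → g v ≤ i))
    (p : Fin m) : g (u p) = p := by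
  obtain ⟨h1, h2⟩ := hg (u p) ⟨p, fun t => le_rfl⟩
  have hle : g (u p) ≤ p := h2 p (fun t => le_rfl)
  rcases lt_or_eq_of_le hle with hlt | heq
  · obtain ⟨x, _, hx⟩ := (hq p (fun _ => 0)).mp
      ⟨g (u p), hlt, fun t => by simpa using h1 t⟩
    omega
  · exact heq

/-- Key lemma: multiplying by one extra variable commutes with taking the
decomposition function. -/
lemma crux {n m : ℕ} (u : Fin m → Fin n → ℕ)
    (q : Fin m → Finset (Fin n)) (g : (Fin n → ℕ) → Fin m)
    (hq : ∀ j : Fin m, ∀ w : Fin n → ℕ,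
      ((∃ i, i < j ∧ ∀ t, u i t ≤ w t + u j t) ↔ ∃ x ∈ q j, 1 ≤ w x))
    (hg : ∀ v : Fin n → ℕ, (∃ i, ∀ t, u i t ≤ v t) →
      ((∀ t, u (g v) t ≤ v t) ∧ ∀ i, (∀ t, u i t ≤ v t) → g v ≤ i))
    (hreg : ∀ j : Fin m, ∀ y ∈ q j,
      q (g (fun t => u j t + if t = y then 1 else 0)) ⊆ q j)
    (v : Fin n → ℕ) (hv : ∃ i, ∀ t, u i t ≤ v t) (x : Fin n) :
    g (fun t => v t + if t = x then 1 else 0)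
      = g (fun t => u (g v) t + if t = x then 1 else 0) := by
  obtain ⟨i0, hi0⟩ := hv
  obtain ⟨hk1, hk2⟩ := hg (fun t => v t + if t = x then 1 else 0)
    ⟨i0, fun t => (hi0 t).trans (Nat.le_add_right _ _)⟩
  obtain ⟨hp1, hp2⟩ := hg v ⟨i0, hi0⟩
  obtain ⟨hq1, hq2⟩ := hg (fun t => u (g v) t + if t = x then 1 else 0)
    ⟨g v, fun t => Nat.le_add_right _ _⟩
  by_contra hne
  have hkp1 : g (fun t => v t + if t = x then 1 else 0)
      ≤ g (fun t => u (g v) t + if t = x then 1 else 0) :=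
    hk2 _ (fun t => (hq1 t).trans (Nat.add_le_add_right (hp1 t) _))
  have hklt : g (fun t => v t + if t = x then 1 else 0)
      < g (fun t => u (g v) t + if t = x then 1 else 0) := lt_of_le_of_ne hkp1 hne
  have hp1p : g (fun t => u (g v) t + if t = x then 1 else 0) ≤ g v :=
    hq2 (g v) (fun t => Nat.le_add_right _ _)
  have hkp : g (fun t => v t + if t = x then 1 else 0) < g v := lt_of_lt_of_le hklt hp1p
  -- Step A: find a quotient variable where u k exceeds u (g v)
  obtain ⟨x0, hx0q, hx0⟩ := (hq (g v)
      (fun t => u (g (fun t => v t + if t = x then 1 else 0)) t - u (g v) t)).mp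
    ⟨g (fun t => v t + if t = x then 1 else 0), hkp, fun t => by omega⟩
  -- no slack at x0
  have hvx0 : v x0 ≤ u (g v) x0 := by
    by_contra hcon
    push_neg at hcon
    obtain ⟨i, hip, hi⟩ := (hq (g v) (fun t => if t = x0 then 1 else 0)).mpr
      ⟨x0, hx0q, by simp⟩
    have hle : g v ≤ i := hp2 i (fun t => by
      have h2 := hi t
      by_cases hte : t = x0
      · subst hte; simp at h2; omega
      · simp only [if_neg hte, Nat.zero_add] at h2; exact h2.trans (hp1 t))
    exact absurd hip (not_lt.mpr hle)
  have hx0x : x0 = x := by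
    by_contra hcon
    have h1 := hk1 x0
    simp only [if_neg hcon, Nat.add_zero] at h1
    have h3 := hp1 x0
    omega
  subst hx0x
  have hvxeq : v x0 = u (g v) x0 := le_antisymm hvx0 (hp1 x0)
  -- Step B: find a quotient variable of p1 where u k exceeds u p1
  obtain ⟨z, hzq, hz⟩ := (hq (g (fun t => u (g v) t + if t = x0 then 1 else 0))
      (fun t => u (g (fun t => v t + if t = x0 then 1 else 0)) t
        - u (g (fun t => u (g v) t + if t = x0 then 1 else 0)) t)).mp
    ⟨g (fun t => v t + if t = x0 then 1 else 0), hklt, fun t => by omega⟩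
  have hnoslack : u (g v) z + (if z = x0 then 1 else 0)
      ≤ u (g (fun t => u (g v) t + if t = x0 then 1 else 0)) z := by
    by_contra hcon
    push_neg at hcon
    obtain ⟨i, hip, hi⟩ := (hq (g (fun t => u (g v) t + if t = x0 then 1 else 0))
        (fun t => if t = z then 1 else 0)).mpr ⟨z, hzq, by simp⟩
    have hle : g (fun t => u (g v) t + if t = x0 then 1 else 0) ≤ i := hq2 i (fun t => by
      have h2 := hi t
      by_cases hte : t = z
      · subst hte
        simp at h2
        omega
      · simp only [if_neg hte, Nat.zero_add] at h2
        exact h2.trans (hq1 t))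
    exact absurd hip (not_lt.mpr hle)
  have hzx : z ≠ x0 := by
    intro hcon
    subst hcon
    simp only [if_pos rfl] at hnoslack
    have h1 := hk1 z
    simp only [if_pos rfl] at h1
    omega
  have hslackz : u (g v) z < v z := by
    have h1 := hk1 z
    simp only [if_neg hzx, Nat.add_zero] at h1
    have h4 := hnoslack
    simp only [if_neg hzx, Nat.add_zero] at h4
    omega
  have hzqp : z ∈ q (g v) := hreg (g v) x0 hx0q hzq
  obtain ⟨i, hip, hi⟩ := (hq (g v) (fun t => if t = z then 1 else 0)).mpr
    ⟨z, hzqp, by simp⟩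
  have hle : g v ≤ i := hp2 i (fun t => by
    have h2 := hi t
    by_cases hte : t = z
    · subst hte; simp at h2; omega
    · simp only [if_neg hte, Nat.zero_add] at h2; exact h2.trans (hp1 t))
  exact absurd hip (not_lt.mpr hle)

/-- Iterated version over a finite set of variables. -/
lemma g_iter {n m : ℕ} (u : Fin m → Fin n → ℕ)
    (q : Fin m → Finset (Fin n)) (g : (Fin n → ℕ) → Fin m)
    (hq : ∀ j : Fin m, ∀ w : Fin n → ℕ,
      ((∃ i, i < j ∧ ∀ t, u i t ≤ w t + u j t) ↔ ∃ x ∈ q j, 1 ≤ w x))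
    (hg : ∀ v : Fin n → ℕ, (∃ i, ∀ t, u i t ≤ v t) →
      ((∀ t, u (g v) t ≤ v t) ∧ ∀ i, (∀ t, u i t ≤ v t) → g v ≤ i))
    (hreg : ∀ j : Fin m, ∀ y ∈ q j,
      q (g (fun t => u j t + if t = y then 1 else 0)) ⊆ q j)
    (ρ : Finset (Fin n)) : ∀ (v : Fin n → ℕ), (∃ i, ∀ t, u i t ≤ v t) →
    g (fun t => v t + if t ∈ ρ then 1 else 0)
      = g (fun t => u (g v) t + if t ∈ ρ then 1 else 0) ∧
    ∀ t, u (g (fun t => v t + if t ∈ ρ then 1 else 0)) t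
      ≤ u (g v) t + if t ∈ ρ then 1 else 0 := by
  induction ρ using Finset.induction_on with
  | empty =>
    intro v hv
    simp only [Finset.notMem_empty, if_false, Nat.add_zero]
    constructor
    · exact (g_of_gen u q g hq hg (g v)).symm
    · exact fun t => le_rfl
  | @insert x s hx ih =>
    intro v hv
    have hsplit : ∀ (w : Fin n → ℕ),
        (fun t => w t + if t ∈ insert x s then 1 else 0)
          = (fun t => (w t + if t = x then 1 else 0) + if t ∈ s then 1 else 0) := by
      intro w
      funext t
      by_cases h1 : t = x
      · subst h1; simp [hx]
      · simp [Finset.mem_insert, h1]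
    obtain ⟨i0, hi0⟩ := hv
    have hvx : ∃ i, ∀ t, u i t ≤ v t + if t = x then 1 else 0 :=
      ⟨i0, fun t => (hi0 t).trans (Nat.le_add_right _ _)⟩
    have hupx : ∃ i, ∀ t, u i t ≤ u (g v) t + if t = x then 1 else 0 :=
      ⟨g v, fun t => Nat.le_add_right _ _⟩
    have hcr := crux u q g hq hg hreg v ⟨i0, hi0⟩ x
    obtain ⟨ih1, ih2⟩ := ih (fun t => v t + if t = x then 1 else 0) hvx
    obtain ⟨ih1', ih2'⟩ := ih (fun t => u (g v) t + if t = x then 1 else 0) hupx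
    rw [hsplit v, hsplit (u (g v))]
    constructor
    · rw [ih1, ih1', hcr]
    · intro t
      have h2 := ih2 t
      rw [hcr] at h2
      obtain ⟨hb, _⟩ := hg (fun t => u (g v) t + if t = x then 1 else 0) hupx
      have hb' := hb t
      by_cases h1 : t = x
      · subst h1
        simp at hb' ⊢
        by_cases h3 : t ∈ s
        · exact absurd h3 hx
        · simp [h3] at h2; omega
      · simp only [if_neg h1, Nat.add_zero] at hb'
        simp only [Finset.mem_insert, h1, false_or] at h2 ⊢
        by_cases h3 : t ∈ s <;> simp only [h3, if_true, if_false] at h2 ⊢ <;> omega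

/-- Setup: regular linear quotient (admissible order `u`, quotient sets `q`,
regular decomposition function `g`).  For `σ ⊆ τ ⊆ 𝔮(u_j)` we have
`𝔤(τ; u_j) = 𝔤(τ∖σ; 𝔤(σ; u_j))`; in particular `𝔤(τ;u_j)` divides
`𝔤(σ;u_j)·∏_{y∈τ∖σ} y`. -/
theorem decomposition_iterated (n m : ℕ) (u : Fin m → Fin n → ℕ)
    (q : Fin m → Finset (Fin n)) (g : (Fin n → ℕ) → Fin m)
    (hq : ∀ j : Fin m, ∀ w : Fin n → ℕ,
      ((∃ i, i < j ∧ ∀ t, u i t ≤ w t + u j t) ↔ ∃ x ∈ q j, 1 ≤ w x))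
    (hg : ∀ v : Fin n → ℕ, (∃ i, ∀ t, u i t ≤ v t) →
      ((∀ t, u (g v) t ≤ v t) ∧ ∀ i, (∀ t, u i t ≤ v t) → g v ≤ i))
    (hreg : ∀ j : Fin m, ∀ y ∈ q j,
      q (g (fun t => u j t + if t = y then 1 else 0)) ⊆ q j)
    (j : Fin m) (σ τ : Finset (Fin n)) (hτ : τ ⊆ q j) (hστ : σ ⊆ τ) :
    g (fun t => u j t + if t ∈ τ then 1 else 0)
      = g (fun t => u (g (fun s => u j s + if s ∈ σ then 1 else 0)) t
          + if t ∈ τ \ σ then 1 else 0) ∧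
    (∀ t, u (g (fun s => u j s + if s ∈ τ then 1 else 0)) t
      ≤ u (g (fun s => u j s + if s ∈ σ then 1 else 0)) t
          + if t ∈ τ \ σ then 1 else 0) := by
  have e1 : (fun t => (u j t + if t ∈ σ then 1 else 0) + if t ∈ τ \ σ then 1 else 0)
      = (fun t => u j t + if t ∈ τ then 1 else 0) := by
    funext t
    by_cases hs : t ∈ σ
    · have ht : t ∈ τ := hστ hs
      simp [hs, ht, Finset.mem_sdiff]
    · by_cases ht : t ∈ τ <;> simp [Finset.mem_sdiff, hs, ht]
  rw [← e1]
  exact g_iter u q g hq hg hreg (τ \ σ)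
    (fun t => u j t + if t ∈ σ then 1 else 0) ⟨j, fun t => Nat.le_add_right _ _⟩
end
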